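/- Let F ∈ Fields_1 and let p ∈ F[t] be a monic irreducible polynomial. (i) For every a ∈ Λ^3 F(p)^× there exists b ∈ Λ^4 F(t)^× with ∂_{ν_p}^{(4)}(b) = a and ∂_{ν_q}^{(4)}(b) = 0 for every monic irreducible q ∈ F[t] with q ≠ p. (ii) For every a ∈ B_2(F(p))⊗F(p)^× there exists b ∈ B_2(F(t))⊗Λ^2 F(t)^× with ∂_{ν_p}(b) = a and ∂_{ν_q}(b) = 0 for every monic irreducible q ∈ F[t] with q ≠ p. -/

import Mathlib

open scoped TensorProduct
open ExteriorAlgebra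

noncomputable section ChowPrelim

universe u

/-- The ℚ-vector space `F^× ⊗ ℚ` attached to a field `F`. -/
abbrev UnitsQ (F : Type u) [Field F] : Type u := ℚ ⊗[ℤ] (Additive Fˣ)

/-- The canonical map `F → F^× ⊗ ℚ`, sending a nonzero `x` to `x ⊗ 1` and `0` to `0`. -/
noncomputable def mkQ {F : Type u} [Field F] (x : F) : UnitsQ F :=
  letI := Classical.dec (x = 0)
  if h : x = 0 then 0 else (1 : ℚ) ⊗ₜ[ℤ] (Additive.ofMul (Units.mk0 x h))

/-- The wedge `x₁ ∧ ⋯ ∧ xₙ ∈ Λ^n (F^× ⊗ ℚ)` of a family of elements of `F`. -/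
noncomputable def wedgeF {F : Type u} [Field F] (n : ℕ) (x : Fin n → F) :
    ⋀[ℚ]^n (UnitsQ F) :=
  ⟨ExteriorAlgebra.ιMulti ℚ n (fun i => mkQ (x i)),
    ExteriorAlgebra.ιMulti_range ℚ n ⟨_, rfl⟩⟩

/-- Wedge of an abstract family of vectors. -/
noncomputable def wedgeV {M : Type u} [AddCommGroup M] [Module ℚ M] (n : ℕ) (v : Fin n → M) :
    ⋀[ℚ]^n M :=
  ⟨ExteriorAlgebra.ιMulti ℚ n v, ExteriorAlgebra.ιMulti_range ℚ n ⟨_, rfl⟩⟩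

/-- The product `a ∧ v₁ ∧ ⋯ ∧ v_q : Λ^r M` of an element `a ∈ Λ^p M` with `q` further vectors,
where `p + q = r`. -/
noncomputable def wedgeMulC {M : Type u} [AddCommGroup M] [Module ℚ M] (p q r : ℕ)
    (h : p + q = r) (a : ⋀[ℚ]^p M) (v : Fin q → M) : ⋀[ℚ]^r M :=
  ⟨a.1 * (ExteriorAlgebra.ιMulti ℚ q v : ExteriorAlgebra ℚ M), by
    subst h
    have hmem : (ExteriorAlgebra.ιMulti ℚ q v : ExteriorAlgebra ℚ M) ∈
        (LinearMap.range (ι ℚ : M →ₗ[ℚ] ExteriorAlgebra ℚ M)) ^ q :=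
      ExteriorAlgebra.ιMulti_range ℚ q ⟨_, rfl⟩
    have h2 := Submodule.mul_mem_mul a.2 hmem
    rw [← pow_add] at h2
    exact h2⟩

/-- The functorial map `Λ^n M → Λ^n N` induced by a linear map. -/
noncomputable def powMap {M N : Type u} [AddCommGroup M] [Module ℚ M]
    [AddCommGroup N] [Module ℚ N] (n : ℕ) (f : M →ₗ[ℚ] N) :
    ⋀[ℚ]^n M →ₗ[ℚ] ⋀[ℚ]^n N :=
  (ExteriorAlgebra.map f).toLinearMap.restrict (p := ⋀[ℚ]^n M) (q := ⋀[ℚ]^n N)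
    (by
      intro x hx
      have h : Submodule.map (ExteriorAlgebra.map f).toLinearMap (⋀[ℚ]^n M) ≤ ⋀[ℚ]^n N := by
        rw [← ExteriorAlgebra.ιMulti_span_fixedDegree, ← ExteriorAlgebra.ιMulti_span_fixedDegree,
          Submodule.map_span]
        refine Submodule.span_le.2 ?_
        rintro _ ⟨_, ⟨v, rfl⟩, rfl⟩
        exact Submodule.subset_span ⟨f ∘ v, (ExteriorAlgebra.map_apply_ιMulti f v).symm⟩
      exact h ⟨x, hx, rfl⟩)

/-- The linear map `F^× ⊗ ℚ → K^× ⊗ ℚ` induced by a field embedding. -/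
noncomputable def unitsQMap {F K : Type u} [Field F] [Field K] (j : F →+* K) :
    UnitsQ F →ₗ[ℚ] UnitsQ K :=
  LinearMap.baseChange ℚ
    ((MonoidHom.toAdditive (Units.map (j : F →* K))).toIntLinearMap)

section PreBloch

variable (F : Type u) [Field F]

/-- Auxiliary "difference" of two points of `P^1(F) = Option F` (`none` is `∞`),
used to define the cross-ratio. -/
def pdiff : Option F → Option F → F
  | some a, some b => a - b
  | _, _ => 1

/-- The cross-ratio of four points of `P^1(F)`, as an element of `F`
(it lies in `F ∖ {0,1}` when the four points are distinct). -/
def crossRatio (x1 x2 x3 x4 : Option F) : F :=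
  (pdiff F x1 x3 * pdiff F x2 x4) / (pdiff F x1 x4 * pdiff F x2 x3)

/-- The subspace of relations defining the pre-Bloch group: `{0}₂, {1}₂, {∞}₂` and the
five-term cross-ratio relations for five distinct points of `P^1(F)`. -/
def B2Rel : Submodule ℚ (Option F →₀ ℚ) :=
  Submodule.span ℚ
    ({Finsupp.single (some 0) 1, Finsupp.single (some 1) 1, Finsupp.single none 1} ∪
      {r | ∃ x : Fin 5 → Option F, Function.Injective x ∧
        r = ∑ i : Fin 5, ((-1 : ℚ) ^ (i : ℕ)) •
          Finsupp.single (some (crossRatio F (x (i.succAbove 0)) (x (i.succAbove 1))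
            (x (i.succAbove 2)) (x (i.succAbove 3)))) (1 : ℚ)})

/-- The pre-Bloch group `B₂(F)` (with ℚ-coefficients). -/
abbrev B2 : Type u := (Option F →₀ ℚ) ⧸ B2Rel F

/-- The generator `{x}₂` of the pre-Bloch group. -/
def B2.gen {F : Type u} [Field F] (x : F) : B2 F :=
  Submodule.Quotient.mk (Finsupp.single (some x) 1)

end PreBloch

section Deltas

variable (F : Type u) [Field F]

/-- `d` is the differential `δ₂ : B₂(F) → Λ² F^×`, `{x}₂ ↦ x ∧ (1-x)`. -/
def IsDelta2 (d : B2 F →ₗ[ℚ] ⋀[ℚ]^2 (UnitsQ F)) : Prop :=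
  ∀ x : F, x ≠ 0 → x ≠ 1 → d (B2.gen x) = wedgeF 2 ![x, 1 - x]

/-- `d` is the differential `δ₃ : B₂(F) ⊗ F^× → Λ³ F^×`, `{x}₂ ⊗ y ↦ x ∧ (1-x) ∧ y`. -/
def IsDelta3 (d : B2 F ⊗[ℚ] UnitsQ F →ₗ[ℚ] ⋀[ℚ]^3 (UnitsQ F)) : Prop :=
  ∀ x y : F, x ≠ 0 → x ≠ 1 → y ≠ 0 →
    d (B2.gen x ⊗ₜ mkQ y) = wedgeF 3 ![x, 1 - x, y]

/-- `d` is the differential `δ₄ : B₂(F) ⊗ Λ² F^× → Λ⁴ F^×`,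
`{x}₂ ⊗ (y ∧ z) ↦ x ∧ (1-x) ∧ y ∧ z`. -/
def IsDelta4 (d : B2 F ⊗[ℚ] (⋀[ℚ]^2 (UnitsQ F)) →ₗ[ℚ] ⋀[ℚ]^4 (UnitsQ F)) : Prop :=
  ∀ x y z : F, x ≠ 0 → x ≠ 1 → y ≠ 0 → z ≠ 0 →
    d (B2.gen x ⊗ₜ wedgeF 2 ![y, z]) = wedgeF 4 ![x, 1 - x, y, z]

end Deltas

section Valuations

variable {F K : Type u} [Field F] [Field K]

/-- `ν` is (the additive form of) a discrete valuation on `F`: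
a surjection onto `ℤ` defined on `F ∖ {0}`, multiplicative, and
satisfying the ultrametric inequality. -/
structure IsDVal (ν : F → ℤ) : Prop where
  map_mul : ∀ x y : F, x ≠ 0 → y ≠ 0 → ν (x * y) = ν x + ν y
  map_add : ∀ x y : F, x ≠ 0 → y ≠ 0 → x + y ≠ 0 → min (ν x) (ν y) ≤ ν (x + y)
  surj : ∀ n : ℤ, ∃ x : F, x ≠ 0 ∧ ν x = n

/-- `res : F → K` realizes `K` as the residue field of the discrete valuation `ν`:
it is a surjective ring homomorphism on the valuation ring `O_ν` with kernel the
maximal ideal `m_ν` (and arbitrary elsewhere). -/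
structure IsResidue (ν : F → ℤ) (res : F → K) : Prop where
  map_one : res 1 = 1
  map_add : ∀ x y : F, (x = 0 ∨ 0 ≤ ν x) → (y = 0 ∨ 0 ≤ ν y) →
    res (x + y) = res x + res y
  map_mul : ∀ x y : F, (x = 0 ∨ 0 ≤ ν x) → (y = 0 ∨ 0 ≤ ν y) →
    res (x * y) = res x * res y
  zero_iff : ∀ x : F, (x = 0 ∨ 0 ≤ ν x) → (res x = 0 ↔ (x = 0 ∨ 0 < ν x))
  surj : ∀ z : K, ∃ x : F, (x = 0 ∨ 0 ≤ ν x) ∧ res x = z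

/-- `D` is the tame symbol `∂_ν^{(n+1)} : Λ^{n+1} F^× → Λ^n K^×` attached to the discrete
valuation `ν` with residue field `K` (via `res`): it is characterized by
`∂(π ∧ u₂ ∧ ⋯ ∧ u_{n+1}) = ū₂ ∧ ⋯ ∧ ū_{n+1}` for a uniformizer `π` and units `uᵢ`. -/
def IsTame (ν : F → ℤ) (res : F → K) (n : ℕ)
    (D : ⋀[ℚ]^(n + 1) (UnitsQ F) →ₗ[ℚ] ⋀[ℚ]^n (UnitsQ K)) : Prop :=
  ∀ (π : F) (u : Fin n → F), π ≠ 0 → ν π = 1 → (∀ i, u i ≠ 0 ∧ ν (u i) = 0) →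
    D (wedgeF (n + 1) (Fin.cons π u)) = wedgeF n (fun i => res (u i))

/-- `D` is the tame symbol `∂_ν^{(2)} : Λ² F^× → K^×`, with target the residue field itself. -/
def IsTame2U (ν : F → ℤ) (res : F → K) (D : ⋀[ℚ]^2 (UnitsQ F) →ₗ[ℚ] UnitsQ K) : Prop :=
  ∀ π u : F, π ≠ 0 → ν π = 1 → u ≠ 0 → ν u = 0 → D (wedgeF 2 ![π, u]) = mkQ (res u)

/-- `D` is the tame symbol `∂_ν : B₂(F) ⊗ F^× → B₂(K)`. -/
def IsTameB1 (ν : F → ℤ) (res : F → K)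
    (D : B2 F ⊗[ℚ] UnitsQ F →ₗ[ℚ] B2 K) : Prop :=
  (∀ a b : F, a ≠ 0 → a ≠ 1 → ν a ≠ 0 → b ≠ 0 → D (B2.gen a ⊗ₜ mkQ b) = 0) ∧
  (∀ u b : F, u ≠ 0 → ν u = 0 → b ≠ 0 →
    D (B2.gen u ⊗ₜ mkQ b) = -((ν b : ℚ) • B2.gen (res u)))

/-- `D` is the tame symbol `∂_ν : B₂(F) ⊗ Λ² F^× → B₂(K) ⊗ K^×`, where `D2` is the tame
symbol `∂_ν^{(2)}`. -/
def IsTameB2 (ν : F → ℤ) (res : F → K) (D2 : ⋀[ℚ]^2 (UnitsQ F) →ₗ[ℚ] UnitsQ K)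
    (D : B2 F ⊗[ℚ] (⋀[ℚ]^2 (UnitsQ F)) →ₗ[ℚ] B2 K ⊗[ℚ] UnitsQ K) : Prop :=
  (∀ (a : F) (b : ⋀[ℚ]^2 (UnitsQ F)), a ≠ 0 → a ≠ 1 → ν a ≠ 0 → D (B2.gen a ⊗ₜ b) = 0) ∧
  (∀ (u : F) (b : ⋀[ℚ]^2 (UnitsQ F)), u ≠ 0 → ν u = 0 →
    D (B2.gen u ⊗ₜ b) = -(B2.gen (res u) ⊗ₜ D2 b))

/-- `D` is the tame symbol `∂_ν : B₂(F) ⊗ Λ^{n+1} F^× → B₂(K) ⊗ Λ^n K^×`, where `Dn` is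
the tame symbol `∂_ν^{(n+1)}`. -/
def IsTameBGen (ν : F → ℤ) (res : F → K) (n : ℕ)
    (Dn : ⋀[ℚ]^(n + 1) (UnitsQ F) →ₗ[ℚ] ⋀[ℚ]^n (UnitsQ K))
    (D : B2 F ⊗[ℚ] (⋀[ℚ]^(n + 1) (UnitsQ F)) →ₗ[ℚ] B2 K ⊗[ℚ] (⋀[ℚ]^n (UnitsQ K))) : Prop :=
  (∀ (a : F) (b : ⋀[ℚ]^(n + 1) (UnitsQ F)), a ≠ 0 → a ≠ 1 → ν a ≠ 0 →
    D (B2.gen a ⊗ₜ b) = 0) ∧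
  (∀ (u : F) (b : ⋀[ℚ]^(n + 1) (UnitsQ F)), u ≠ 0 → ν u = 0 →
    D (B2.gen u ⊗ₜ b) = -(B2.gen (res u) ⊗ₜ Dn b))

end Valuations

section Fields

variable (k F : Type u) [Field k] [Field F] [Algebra k F]

/-- `F` is a finitely generated extension of `k` of transcendence degree `1`. -/
def IsFields1 : Prop :=
  (∃ s : Finset F, IntermediateField.adjoin k (s : Set F) = ⊤) ∧
  ∃ x : F, Transcendental k x ∧
    Algebra.IsAlgebraic (IntermediateField.adjoin k {x}) F

/-- `F` is a finitely generated extension of `k` of transcendence degree `2`. -/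
def IsFields2 : Prop :=
  (∃ s : Finset F, IntermediateField.adjoin k (s : Set F) = ⊤) ∧
  ∃ x y : F, AlgebraicIndependent k ![x, y] ∧
    Algebra.IsAlgebraic (IntermediateField.adjoin k {x, y}) F

/-- `res : F → k` is the canonical residue map of `ν` onto `k`
(restricting to the identity on `k`). -/
def GoodResK (ν : F → ℤ) (res : F → k) : Prop :=
  IsResidue ν res ∧ ∀ c : k, res (algebraMap k F c) = c

/-- The set `val(F)` of discrete valuations of `F` trivial on `k` with residue field `k`. -/
def ValInd : Type u :=
  {ν : F → ℤ // IsDVal ν ∧ (∀ c : k, c ≠ 0 → ν (algebraMap k F c) = 0) ∧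
    ∃ res : F → k, GoodResK k F ν res}

/-- `h : Λ³ F^× → B₂(k)` is a lifted reciprocity map on `F ∈ Fields₁`:
(1) `-δ₂(h a) = Σ_{ν ∈ val(F)} ∂_ν^{(3)} a`;
(2) `h (δ₃ c) = Σ_{ν ∈ val(F)} ∂_ν c`;
(3) `h` vanishes on the image of `Λ² F^× ⊗ k^× → Λ³ F^×`. -/
def IsLiftedRec (h : ⋀[ℚ]^3 (UnitsQ F) →ₗ[ℚ] B2 k) : Prop :=
  (∀ d2 : B2 k →ₗ[ℚ] ⋀[ℚ]^2 (UnitsQ k), IsDelta2 k d2 →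
    ∀ res : ∀ _ : ValInd k F, F → k, (∀ v : ValInd k F, GoodResK k F v.1 (res v)) →
    ∀ D : ∀ _ : ValInd k F, ⋀[ℚ]^3 (UnitsQ F) →ₗ[ℚ] ⋀[ℚ]^2 (UnitsQ k),
      (∀ v : ValInd k F, IsTame v.1 (res v) 2 (D v)) →
    ∀ a : ⋀[ℚ]^3 (UnitsQ F), -(d2 (h a)) = ∑ᶠ v : ValInd k F, D v a) ∧
  (∀ d3 : B2 F ⊗[ℚ] UnitsQ F →ₗ[ℚ] ⋀[ℚ]^3 (UnitsQ F), IsDelta3 F d3 →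
    ∀ res : ∀ _ : ValInd k F, F → k, (∀ v : ValInd k F, GoodResK k F v.1 (res v)) →
    ∀ DB : ∀ _ : ValInd k F, B2 F ⊗[ℚ] UnitsQ F →ₗ[ℚ] B2 k,
      (∀ v : ValInd k F, IsTameB1 v.1 (res v) (DB v)) →
    ∀ c : B2 F ⊗[ℚ] UnitsQ F, h (d3 c) = ∑ᶠ v : ValInd k F, DB v c) ∧
  (∀ (y z : F) (c : k), y ≠ 0 → z ≠ 0 → c ≠ 0 →
    h (wedgeF 3 ![y, z, algebraMap k F c]) = 0)

end Fields

/-- The degree `[K : j(F)]` of a field embedding. -/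
noncomputable def fieldDeg {F K : Type u} [Field F] [Field K] (j : F →+* K) : ℕ :=
  letI : Algebra F K := j.toAlgebra
  Module.finrank F K

/-- The pullback `j^* h = (1/[F₂ : j(F₁)]) · h ∘ j_*` of a lifted reciprocity map. -/
noncomputable def pullRec (k F₁ F₂ : Type u) [Field k] [Field F₁] [Field F₂]
    (j : F₁ →+* F₂) (h : ⋀[ℚ]^3 (UnitsQ F₂) →ₗ[ℚ] B2 k) :
    ⋀[ℚ]^3 (UnitsQ F₁) →ₗ[ℚ] B2 k :=
  ((fieldDeg j : ℚ))⁻¹ • (h ∘ₗ powMap 3 (unitsQMap j))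

end ChowPrelim

noncomputable section ChowPrelim2

universe u

open scoped TensorProduct

/-- The monic irreducible polynomials over `F`, indexing the closed points of `𝔸¹_F`,
i.e. the general discrete valuations of `F(t)`. -/
def MonicIrr (F : Type u) [Field F] : Type u :=
  {p : Polynomial F // p.Monic ∧ Irreducible p}

/-- The residue field `F(p) = F[t]/(p)` of the valuation attached to a monic irreducible
polynomial `p`. -/
def ResField {F : Type u} [Field F] (p : MonicIrr F) : Type u := AdjoinRoot p.1

noncomputable instance ResField.instField {F : Type u} [Field F] (p : MonicIrr F) :
    Field (ResField p) :=
  letI : Fact (Irreducible p.1) := ⟨p.2.2⟩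
  inferInstanceAs (Field (AdjoinRoot p.1))

/-- `ν` is the discrete valuation of `F(t)` attached to the monic irreducible polynomial `p`. -/
def IsNuP {F : Type u} [Field F] (p : MonicIrr F) (ν : RatFunc F → ℤ) : Prop :=
  IsDVal ν ∧ ν (algebraMap (Polynomial F) (RatFunc F) p.1) = 1 ∧
    ∀ g : Polynomial F, g ≠ 0 → ¬(p.1 ∣ g) →
      ν (algebraMap (Polynomial F) (RatFunc F) g) = 0

/-- `res` is the canonical residue map `F(t) → F(p)` of the valuation attached to `p`. -/
def IsResP {F : Type u} [Field F] (p : MonicIrr F) (ν : RatFunc F → ℤ)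
    (res : RatFunc F → ResField p) : Prop :=
  IsResidue ν res ∧ ∀ g : Polynomial F,
    res (algebraMap (Polynomial F) (RatFunc F) g) =
      (AdjoinRoot.mk p.1 g : AdjoinRoot p.1)

/-- Bundled realization of the residue field of a discrete valuation `ν` on `L`
(trivial on `k`): a field `R` with a `k`-algebra structure together with the residue map. -/
structure ResData (k L : Type u) [Field k] [Field L] [Algebra k L] (ν : L → ℤ) :
    Type (u + 1) where
  R : Type u
  [fieldR : Field R]
  [algR : Algebra k R]
  res : L → R
  isRes : IsResidue ν res
  compat : ∀ c : k, res (algebraMap k L c) = algebraMap k R c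

attribute [instance] ResData.fieldR ResData.algR

/-- The set `dval(L)` of divisorial valuations of `L ∈ Fields₂`: discrete valuations trivial
on `k` whose residue field is a finitely generated extension of `k` of transcendence
degree `1`. -/
def DValInd (k L : Type u) [Field k] [Field L] [Algebra k L] : Type u :=
  {ν : L → ℤ // IsDVal ν ∧ (∀ c : k, c ≠ 0 → ν (algebraMap k L c) = 0) ∧
    ∃ rd : ResData k L ν, IsFields1 k rd.R}

/-- A height-one prime ideal (in a domain). -/
def IsHeightOne {R : Type u} [CommRing R] (p : Ideal R) : Prop :=
  p.IsPrime ∧ p ≠ ⊥ ∧ ∀ q : Ideal R, q.IsPrime → q < p → q = ⊥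

/-- `R/p` is regular, i.e. (for a one-dimensional local ring) the maximal ideal of `R/p`
is principal. -/
def QuotRegular {R : Type u} [CommRing R] [IsLocalRing R] (p : Ideal R) : Prop :=
  ∃ t : R, Ideal.map (Ideal.Quotient.mk p) (IsLocalRing.maximalIdeal R) =
    Ideal.span {Ideal.Quotient.mk p t}

/-- The height-one primes `p` of `R` with `R/p` regular. -/
def RegPrimes (R : Type u) [CommRing R] [IsLocalRing R] : Type u :=
  {p : Ideal R // IsHeightOne p ∧ QuotRegular p}

instance RegPrimes.isPrime {R : Type u} [CommRing R] [IsLocalRing R] (p : RegPrimes R) :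
    p.1.IsPrime := p.2.1.1

/-- The residue field `κ(p) = Frac(R/p)` of a prime `p`. -/
def ResFieldP {R : Type u} [CommRing R] [IsLocalRing R] [IsDomain R] (p : RegPrimes R) :
    Type u := FractionRing (R ⧸ p.1)

noncomputable instance ResFieldP.instField {R : Type u} [CommRing R] [IsLocalRing R]
    [IsDomain R] (p : RegPrimes R) : Field (ResFieldP p) :=
  inferInstanceAs (Field (FractionRing (R ⧸ p.1)))

/-- `ν` is the discrete valuation `ν_p` of `L = Frac R` attached to a height-one prime `p`:
it is nonnegative on `R` and positive exactly on `p`. -/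
def IsNuPrime {R L : Type u} [CommRing R] [Field L] [Algebra R L] (p : Ideal R)
    (ν : L → ℤ) : Prop :=
  IsDVal ν ∧ (∀ x : R, x ≠ 0 → 0 ≤ ν (algebraMap R L x)) ∧
    ∀ x : R, x ≠ 0 → (x ∈ p ↔ 0 < ν (algebraMap R L x))

/-- `res` is the canonical residue map `L → κ(p)` of the valuation `ν_p`. -/
def IsResPrime {R L : Type u} [CommRing R] [IsLocalRing R] [IsDomain R] [Field L]
    [Algebra R L] (p : RegPrimes R) (ν : L → ℤ) (res : L → ResFieldP p) : Prop :=
  IsResidue ν res ∧ ∀ x : R,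
    res (algebraMap R L x) =
      algebraMap (R ⧸ p.1) (FractionRing (R ⧸ p.1)) (Ideal.Quotient.mk p.1 x)

/-- `ν̄` is the discrete valuation of `κ(p)` attached to the discrete valuation ring `R/p`:
nonnegative on `R/p` and positive exactly on the image of the maximal ideal of `R`. -/
def IsNuBar {R : Type u} [CommRing R] [IsLocalRing R] [IsDomain R] (p : RegPrimes R)
    (ν : ResFieldP p → ℤ) : Prop :=
  IsDVal ν ∧
  (∀ x : R ⧸ p.1, x ≠ 0 →
    0 ≤ ν (algebraMap (R ⧸ p.1) (FractionRing (R ⧸ p.1)) x)) ∧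
  ∀ x : R, Ideal.Quotient.mk p.1 x ≠ 0 →
    (x ∈ IsLocalRing.maximalIdeal R ↔
      0 < ν (algebraMap (R ⧸ p.1) (FractionRing (R ⧸ p.1)) (Ideal.Quotient.mk p.1 x)))

/-- `res` is the canonical residue map `κ(p) → k` of the valuation `ν̄_p`
(restricting to the identity on `k`). -/
def IsResBar {k R : Type u} [Field k] [CommRing R] [IsLocalRing R] [IsDomain R]
    [Algebra k R] (p : RegPrimes R) (ν : ResFieldP p → ℤ) (res : ResFieldP p → k) : Prop :=
  IsResidue ν res ∧ ∀ c : k,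
    res (algebraMap (R ⧸ p.1) (FractionRing (R ⧸ p.1))
      (Ideal.Quotient.mk p.1 (algebraMap k R c))) = c

/-- The Steinberg relations subspace of `Λ^n F^×` (with ℚ-coefficients). -/
def MilnorRel (F : Type u) [Field F] : (n : ℕ) → Submodule ℚ (⋀[ℚ]^n (UnitsQ F))
  | 0 => ⊥
  | 1 => ⊥
  | (m + 2) => Submodule.span ℚ
      {x | ∃ (a : F) (v : Fin m → F), a ≠ 0 ∧ a ≠ 1 ∧ (∀ i, v i ≠ 0) ∧
        x = wedgeF (m + 2) (Fin.cons a (Fin.cons (1 - a) v))}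

/-- The rational Milnor K-group `K_n^M(F) ⊗ ℚ`: the quotient of `Λ^n F^×` by the
Steinberg relations. -/
def MilnorQ (F : Type u) [Field F] (n : ℕ) : Type u :=
  (⋀[ℚ]^n (UnitsQ F)) ⧸ MilnorRel F n

noncomputable instance MilnorQ.instAddCommGroup (F : Type u) [Field F] (n : ℕ) :
    AddCommGroup (MilnorQ F n) :=
  inferInstanceAs (AddCommGroup ((⋀[ℚ]^n (UnitsQ F)) ⧸ MilnorRel F n))

noncomputable instance MilnorQ.instModule (F : Type u) [Field F] (n : ℕ) :
    Module ℚ (MilnorQ F n) :=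
  inferInstanceAs (Module ℚ ((⋀[ℚ]^n (UnitsQ F)) ⧸ MilnorRel F n))

/-- The class of an element of `Λ^n F^×` in `K_n^M(F) ⊗ ℚ`. -/
def MilnorQ.mk {F : Type u} [Field F] {n : ℕ} (x : ⋀[ℚ]^n (UnitsQ F)) : MilnorQ F n :=
  Submodule.Quotient.mk x

end ChowPrelim2

open scoped TensorProduct

universe u

/-! Let `gᵢ` be the representatives of degree `< deg p` of given nonzero residues in `F(p)`. The
residue at `p` of `p ∧ g₁ ∧ g₂ ∧ g₃` (resp. of `-{g₁}₂ ⊗ (p ∧ g₂)`) is the prescribed generator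
`ḡ₁ ∧ ḡ₂ ∧ ḡ₃` (resp. `{ḡ₁}₂ ⊗ ḡ₂`), and its residue at any other monic irreducible `q` vanishes
unless `q` divides some `gᵢ`, so that `deg q < deg p`. By induction on `deg p` these finitely many
defects are cancelled by lifts that vanish away from a single place; since the generators span,
every element lifts. -/

section Units

variable {K : Type u} [Field K]

theorem mkQ_of_ne_zero {x : K} (hx : x ≠ 0) :
    mkQ x = (1 : ℚ) ⊗ₜ[ℤ] Additive.ofMul (Units.mk0 x hx) := by
  simp [mkQ, hx]

theorem mkQ_mul {x y : K} (hx : x ≠ 0) (hy : y ≠ 0) : mkQ (x * y) = mkQ x + mkQ y := by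
  rw [mkQ_of_ne_zero (mul_ne_zero hx hy), mkQ_of_ne_zero hx, mkQ_of_ne_zero hy, Units.mk0_mul,
    ofMul_mul, TensorProduct.tmul_add]

theorem span_mkQ : Submodule.span ℚ {v : UnitsQ K | ∃ x : K, x ≠ 0 ∧ mkQ x = v} = ⊤ := by
  refine Submodule.eq_top_iff'.2 fun v => ?_
  induction v using TensorProduct.induction_on with
  | zero => exact Submodule.zero_mem _
  | add v w hv hw => exact Submodule.add_mem _ hv hw
  | tmul q m =>
    have hm : (1 : ℚ) ⊗ₜ[ℤ] m = mkQ ((Additive.toMul m : Kˣ) : K) := by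
      rw [mkQ_of_ne_zero (Units.ne_zero _), Units.mk0_val]
      rfl
    rw [show q ⊗ₜ[ℤ] m = q • ((1 : ℚ) ⊗ₜ[ℤ] m) by
      rw [TensorProduct.smul_tmul', smul_eq_mul, mul_one], hm]
    exact Submodule.smul_mem _ _ (Submodule.subset_span ⟨_, Units.ne_zero _, rfl⟩)

theorem wedgeF_eq_ιMulti (n : ℕ) (x : Fin n → K) :
    wedgeF n x = exteriorPower.ιMulti ℚ n (mkQ ∘ x) := rfl

theorem span_wedgeF (n : ℕ) :
    Submodule.span ℚ {w : ⋀[ℚ]^n (UnitsQ K) | ∃ u : Fin n → K, (∀ i, u i ≠ 0) ∧ wedgeF n u = w}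
      = ⊤ := by
  rw [eq_top_iff, ← exteriorPower.ιMulti_span_of_span ℚ n (UnitsQ K) span_mkQ, Submodule.span_le]
  rintro _ ⟨v, hv, rfl⟩
  choose u hu0 hu using fun i => hv (Set.mem_range_self i)
  refine Submodule.subset_span ⟨u, hu0, ?_⟩
  rw [wedgeF_eq_ιMulti]
  exact congrArg _ (funext hu)

theorem wedgeF_cons_mul {n : ℕ} {a b : K} (ha : a ≠ 0) (hb : b ≠ 0) (w : Fin n → K) :
    wedgeF (n + 1) (Fin.cons (a * b) w) =
      wedgeF (n + 1) (Fin.cons a w) + wedgeF (n + 1) (Fin.cons b w) := by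
  simp only [wedgeF_eq_ιMulti, Fin.comp_cons, mkQ_mul ha hb]
  exact AlternatingMap.map_vecCons_add _ _ _ _

end Units

theorem B2.span_gen (K : Type u) [Field K] :
    Submodule.span ℚ {y : B2 K | ∃ x : K, x ≠ 0 ∧ B2.gen x = y} = ⊤ := by
  have hrel : ∀ o : Option K, o = none ∨ o = some 0 → Finsupp.single o (1 : ℚ) ∈ B2Rel K :=
    fun o ho => Submodule.subset_span (Or.inl (by rcases ho with rfl | rfl <;> simp))
  rw [eq_top_iff, ← (B2Rel K).range_mkQ, LinearMap.range_eq_map,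
    ← (Finsupp.basisSingleOne (R := ℚ)).span_eq,
    Submodule.map_span, Submodule.span_le]
  rintro _ ⟨_, ⟨o, rfl⟩, rfl⟩
  by_cases ho : o = none ∨ o = some 0
  · rw [Finsupp.coe_basisSingleOne, Submodule.mkQ_apply,
      (Submodule.Quotient.mk_eq_zero _).2 (hrel o ho)]
    exact Submodule.zero_mem _
  · obtain ⟨x, rfl⟩ := Option.ne_none_iff_exists'.1 fun h => ho (Or.inl h)
    exact Submodule.subset_span ⟨x, fun h => ho (Or.inr (congrArg some h)), rfl⟩

theorem span_tmul_eq_top_of_span_eq_top {R M N : Type*} [CommRing R] [AddCommGroup M]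
    [Module R M] [AddCommGroup N] [Module R N] {S : Set M} {T : Set N}
    (hS : Submodule.span R S = ⊤) (hT : Submodule.span R T = ⊤) :
    Submodule.span R (Set.image2 (fun m n => m ⊗ₜ[R] n) S T) = ⊤ := by
  have h := Submodule.map₂_span_span R (TensorProduct.mk R M N) S T
  rw [hS, hT, TensorProduct.map₂_mk_top_top_eq_top] at h
  exact h.symm

section TameSymbol

variable {F K : Type u} [Field F] [Field K] {ν : F → ℤ} {res : F → K}

theorem map_wedgeF_cons_eq_zero {n : ℕ} {N : Type*} [AddCommGroup N] [Module ℚ N]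
    (D : ⋀[ℚ]^(n + 1) (UnitsQ F) →ₗ[ℚ] N) {π a : F} (hπ : π ≠ 0) (ha : a ≠ 0)
    (w : Fin n → F)
    (h : D (wedgeF (n + 1) (Fin.cons (π * a) w)) = D (wedgeF (n + 1) (Fin.cons π w))) :
    D (wedgeF (n + 1) (Fin.cons a w)) = 0 := by
  rwa [wedgeF_cons_mul hπ ha, map_add, add_eq_left] at h

theorem IsTame.map_wedgeF_eq_zero {n : ℕ} {D : ⋀[ℚ]^(n + 1) (UnitsQ F) →ₗ[ℚ] ⋀[ℚ]^n (UnitsQ K)}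
    (hD : IsTame ν res n D) (hν : IsDVal ν) {π : F} (hπ0 : π ≠ 0) (hπ : ν π = 1)
    (u : Fin (n + 1) → F) (hu : ∀ i, u i ≠ 0 ∧ ν (u i) = 0) :
    D (wedgeF (n + 1) u) = 0 := by
  rw [← Fin.cons_self_tail u]
  have htail : ∀ i, Fin.tail u i ≠ 0 ∧ ν (Fin.tail u i) = 0 := fun i => hu i.succ
  refine map_wedgeF_cons_eq_zero D hπ0 (hu 0).1 _ ?_
  rw [hD _ _ (mul_ne_zero hπ0 (hu 0).1) (by rw [hν.map_mul _ _ hπ0 (hu 0).1, hπ, (hu 0).2]; rfl)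
    htail, hD _ _ hπ0 hπ htail]

theorem IsTame2U.map_wedgeF_eq_zero {D : ⋀[ℚ]^2 (UnitsQ F) →ₗ[ℚ] UnitsQ K}
    (hD : IsTame2U ν res D) (hν : IsDVal ν) {π : F} (hπ0 : π ≠ 0) (hπ : ν π = 1)
    {u₁ u₂ : F} (h₁ : u₁ ≠ 0) (hν₁ : ν u₁ = 0) (h₂ : u₂ ≠ 0) (hν₂ : ν u₂ = 0) :
    D (wedgeF 2 ![u₁, u₂]) = 0 := by
  refine map_wedgeF_cons_eq_zero D hπ0 h₁ ![u₂] ?_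
  exact (hD _ _ (mul_ne_zero hπ0 h₁) (by rw [hν.map_mul _ _ hπ0 h₁, hπ, hν₁]; rfl) h₂ hν₂).trans
    (hD _ _ hπ0 hπ h₂ hν₂).symm

end TameSymbol

section IsolatedLift

variable {R ι M : Type*} [CommRing R] [AddCommGroup M] [Module R M] {N : ι → Type*}
  [∀ i, AddCommGroup (N i)] [∀ i, Module R (N i)]

theorem exists_lift_vanishing_off_of_lower_defects (D : ∀ i, M →ₗ[R] N i) (deg : ι → ℕ)
    (S : ∀ i, Set (N i)) (hS : ∀ i, Submodule.span R (S i) = ⊤)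
    (hlift : ∀ i, ∀ a ∈ S i, ∃ b, D i b = a ∧ ∃ T : Set ι, T.Finite ∧
      (∀ j ∈ T, deg j < deg i) ∧ ∀ j ∉ T, j ≠ i → D j b = 0)
    (i : ι) : ∀ a : N i, ∃ b, D i b = a ∧ ∀ j, j ≠ i → D j b = 0 := by
  induction i using (measure deg).wf.induction with
  | _ i ih =>
  let isolated : Submodule R M := ⨅ j, ⨅ _ : j ≠ i, LinearMap.ker (D j)
  suffices hsurj : isolated.map (D i) = ⊤ by
    intro a
    obtain ⟨b, hb, rfl⟩ := hsurj.ge (Submodule.mem_top (x := a))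
    exact ⟨b, rfl, fun j hj => (Submodule.mem_iInf _).1 ((Submodule.mem_iInf _).1 hb j) hj⟩
  rw [eq_top_iff, ← hS i, Submodule.span_le]
  intro a ha
  obtain ⟨b, rfl, T, hT, hdeg, hout⟩ := hlift i a ha
  have hcorr : ∀ j ∈ T, ∃ c, D j c = D j b ∧ ∀ l, l ≠ j → D l c = 0 :=
    fun j hj => ih j (hdeg j hj) _
  choose! c hc hc' using hcorr
  have hTi : ∀ j ∈ hT.toFinset, j ≠ i := fun j hj h =>
    (hdeg j (hT.mem_toFinset.1 hj)).ne (congrArg deg h)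
  refine ⟨b - ∑ j ∈ hT.toFinset, c j, ?_, ?_⟩
  · simp only [isolated, SetLike.mem_coe, Submodule.mem_iInf, LinearMap.mem_ker, map_sub, map_sum]
    intro l hl
    by_cases hlT : l ∈ T
    · rw [Finset.sum_eq_single_of_mem l (hT.mem_toFinset.2 hlT)
        (fun j hj hjl => hc' j (hT.mem_toFinset.1 hj) l (Ne.symm hjl)), hc l hlT, sub_self]
    · rw [Finset.sum_eq_zero (fun j hj => hc' j (hT.mem_toFinset.1 hj) l
        fun h => hlT (h ▸ hT.mem_toFinset.1 hj)), hout l hlT hl, sub_zero]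
  · rw [map_sub, map_sum, Finset.sum_eq_zero (fun j hj => hc' j (hT.mem_toFinset.1 hj) i
      (hTi j hj).symm), sub_zero]

end IsolatedLift

namespace MonicIrr

variable {F : Type u} [Field F]

theorem not_dvd {q r : MonicIrr F} (h : q ≠ r) : ¬ q.1 ∣ r.1 := fun hd =>
  h (Subtype.ext (Polynomial.eq_of_monic_of_associated q.2.1 r.2.1
    (q.2.2.associated_of_dvd r.2.2 hd)))

theorem exists_finite_of_natDegree_lt {ι : Type*} [Finite ι] {g : ι → Polynomial F}
    (hg : ∀ i, g i ≠ 0) {d : ℕ} (hd : ∀ i, (g i).natDegree < d) :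
    ∃ T : Set (MonicIrr F), T.Finite ∧ (∀ q ∈ T, q.1.natDegree < d) ∧
      ∀ q ∉ T, ∀ i, ¬ q.1 ∣ g i := by
  classical
  have hfin : ∀ i, {q : MonicIrr F | q.1 ∣ g i}.Finite := fun i =>
    have := Polynomial.fintypeSubtypeMonicDvd (g i) (hg i)
    Set.finite_coe_iff.1 <| Finite.of_injective
      (fun q => (⟨q.1.1, q.1.2.1, q.2⟩ : {r : Polynomial F // r.Monic ∧ r ∣ g i}))
      fun q r h => Subtype.ext (Subtype.ext (Subtype.mk_eq_mk.1 h))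
  refine ⟨⋃ i, {q | q.1 ∣ g i}, Set.finite_iUnion hfin, ?_, fun q hq i hqi =>
    hq (Set.mem_iUnion.2 ⟨i, hqi⟩)⟩
  intro q hq
  obtain ⟨i, hqi⟩ := Set.mem_iUnion.1 hq
  exact (Polynomial.natDegree_le_of_dvd hqi (hg i)).trans_lt (hd i)

end MonicIrr

section RationalFunctions

variable {F : Type u} [Field F]

local notation "ι" => algebraMap (Polynomial F) (RatFunc F)

theorem IsResP.exists_polynomial_lift {p : MonicIrr F} {ν : RatFunc F → ℤ}
    {res : RatFunc F → ResField p} (hν : IsNuP p ν) (hres : IsResP p ν res) {x : ResField p}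
    (hx : x ≠ 0) :
    ∃ g : Polynomial F, g ≠ 0 ∧ g.natDegree < p.1.natDegree ∧ ν (ι g) = 0 ∧ res (ι g) = x := by
  obtain ⟨f, rfl⟩ := AdjoinRoot.mk_surjective (g := p.1) x
  have hmk : (AdjoinRoot.mk p.1 (f %ₘ p.1) : AdjoinRoot p.1) = AdjoinRoot.mk p.1 f := by
    rw [Polynomial.modByMonic_eq_sub_mul_div f p.1, map_sub, map_mul, AdjoinRoot.mk_self,
      zero_mul, sub_zero]
  have hg0 : f %ₘ p.1 ≠ 0 := fun h => hx (by rw [← hmk, h, map_zero]; rfl)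
  have hdeg : (f %ₘ p.1).natDegree < p.1.natDegree :=
    Polynomial.natDegree_lt_natDegree hg0 (Polynomial.degree_modByMonic_lt f p.2.1)
  exact ⟨f %ₘ p.1, hg0, hdeg, hν.2.2 _ hg0 (p.2.1.not_dvd_of_natDegree_lt hg0 hdeg),
    (hres.2 _).trans hmk⟩

theorem MonicIrr.algebraMap_ne_zero (q : MonicIrr F) : ι q.1 ≠ 0 :=
  RatFunc.algebraMap_ne_zero q.2.1.ne_zero

theorem IsNuP.apply_monicIrr_eq_zero {q p : MonicIrr F} {ν : RatFunc F → ℤ} (hν : IsNuP q ν)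
    (h : q ≠ p) : ν (ι p.1) = 0 :=
  hν.2.2 _ p.2.1.ne_zero (MonicIrr.not_dvd h)

variable {ν : MonicIrr F → RatFunc F → ℤ} {res : ∀ q : MonicIrr F, RatFunc F → ResField q}

theorem IsTame.exists_lift_wedgeF_lower_defects (hν : ∀ q, IsNuP q (ν q))
    (hres : ∀ q, IsResP q (ν q) (res q)) {n : ℕ}
    {D : ∀ q : MonicIrr F, ⋀[ℚ]^(n + 1) (UnitsQ (RatFunc F)) →ₗ[ℚ] ⋀[ℚ]^n (UnitsQ (ResField q))}
    (hD : ∀ q, IsTame (ν q) (res q) n (D q)) (p : MonicIrr F) {u : Fin n → ResField p}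
    (hu : ∀ i, u i ≠ 0) :
    ∃ b, D p b = wedgeF n u ∧ ∃ T : Set (MonicIrr F), T.Finite ∧
      (∀ q ∈ T, q.1.natDegree < p.1.natDegree) ∧ ∀ q ∉ T, q ≠ p → D q b = 0 := by
  choose g hg0 hgdeg hgν hgres using fun i => (hres p).exists_polynomial_lift (hν p) (hu i)
  obtain ⟨T, hT, hTdeg, hTdvd⟩ := MonicIrr.exists_finite_of_natDegree_lt hg0 hgdeg
  refine ⟨wedgeF (n + 1) (Fin.cons (ι p.1) fun i => ι (g i)), ?_, T, hT, hTdeg,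
    fun q hqT hqp => ?_⟩
  · rw [hD p _ _ p.algebraMap_ne_zero (hν p).2.1
      fun i => ⟨RatFunc.algebraMap_ne_zero (hg0 i), hgν i⟩]
    exact congrArg _ (funext hgres)
  · refine (hD q).map_wedgeF_eq_zero (hν q).1 q.algebraMap_ne_zero (hν q).2.1 _
      (Fin.forall_fin_succ.2 ⟨?_, fun i => ?_⟩)
    · exact ⟨p.algebraMap_ne_zero, (hν q).apply_monicIrr_eq_zero hqp⟩
    · exact ⟨RatFunc.algebraMap_ne_zero (hg0 i), (hν q).2.2 _ (hg0 i) (hTdvd q hqT i)⟩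

theorem IsTameB2.exists_lift_gen_tmul_lower_defects (hν : ∀ q, IsNuP q (ν q))
    (hres : ∀ q, IsResP q (ν q) (res q))
    {D2 : ∀ q : MonicIrr F, ⋀[ℚ]^2 (UnitsQ (RatFunc F)) →ₗ[ℚ] UnitsQ (ResField q)}
    (hD2 : ∀ q, IsTame2U (ν q) (res q) (D2 q))
    {DB : ∀ q : MonicIrr F, B2 (RatFunc F) ⊗[ℚ] (⋀[ℚ]^2 (UnitsQ (RatFunc F))) →ₗ[ℚ]
      B2 (ResField q) ⊗[ℚ] UnitsQ (ResField q)}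
    (hDB : ∀ q, IsTameB2 (ν q) (res q) (D2 q) (DB q)) (p : MonicIrr F) {x y : ResField p}
    (hx : x ≠ 0) (hy : y ≠ 0) :
    ∃ b, DB p b = B2.gen x ⊗ₜ mkQ y ∧ ∃ T : Set (MonicIrr F), T.Finite ∧
      (∀ q ∈ T, q.1.natDegree < p.1.natDegree) ∧ ∀ q ∉ T, q ≠ p → DB q b = 0 := by
  obtain ⟨g, hg0, hgdeg, hgν, rfl⟩ := (hres p).exists_polynomial_lift (hν p) hx
  obtain ⟨h, hh0, hhdeg, hhν, rfl⟩ := (hres p).exists_polynomial_lift (hν p) hy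
  obtain ⟨T, hT, hTdeg, hTdvd⟩ := MonicIrr.exists_finite_of_natDegree_lt (g := ![g, h])
    (Fin.forall_fin_two.2 ⟨hg0, hh0⟩) (Fin.forall_fin_two.2 ⟨hgdeg, hhdeg⟩)
  refine ⟨-(B2.gen (ι g) ⊗ₜ wedgeF 2 ![ι p.1, ι h]), ?_, T, hT, hTdeg, fun q hqT hqp => ?_⟩
  · rw [map_neg, (hDB p).2 _ _ (RatFunc.algebraMap_ne_zero hg0) hgν, neg_neg,
      hD2 p _ _ p.algebraMap_ne_zero (hν p).2.1 (RatFunc.algebraMap_ne_zero hh0) hhν]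
  · rw [map_neg, (hDB q).2 _ _ (RatFunc.algebraMap_ne_zero hg0)
        ((hν q).2.2 _ hg0 (hTdvd q hqT 0)),
      (hD2 q).map_wedgeF_eq_zero (hν q).1 q.algebraMap_ne_zero (hν q).2.1 p.algebraMap_ne_zero
        ((hν q).apply_monicIrr_eq_zero hqp) (RatFunc.algebraMap_ne_zero hh0)
        ((hν q).2.2 _ hh0 (hTdvd q hqT 1)),
      TensorProduct.tmul_zero, neg_neg]

end RationalFunctions

theorem statement_7_general (F : Type u) [Field F] (p : MonicIrr F)
    (ν : ∀ q : MonicIrr F, RatFunc F → ℤ) (hν : ∀ q, IsNuP q (ν q))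
    (res : ∀ q : MonicIrr F, RatFunc F → ResField q) (hres : ∀ q, IsResP q (ν q) (res q))
    (D4 : ∀ q : MonicIrr F,
      ⋀[ℚ]^4 (UnitsQ (RatFunc F)) →ₗ[ℚ] ⋀[ℚ]^3 (UnitsQ (ResField q)))
    (hD4 : ∀ q, IsTame (ν q) (res q) 3 (D4 q))
    (D2 : ∀ q : MonicIrr F, ⋀[ℚ]^2 (UnitsQ (RatFunc F)) →ₗ[ℚ] UnitsQ (ResField q))
    (hD2 : ∀ q, IsTame2U (ν q) (res q) (D2 q))
    (DB : ∀ q : MonicIrr F,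
      B2 (RatFunc F) ⊗[ℚ] (⋀[ℚ]^2 (UnitsQ (RatFunc F))) →ₗ[ℚ]
        B2 (ResField q) ⊗[ℚ] UnitsQ (ResField q))
    (hDB : ∀ q, IsTameB2 (ν q) (res q) (D2 q) (DB q)) :
    (∀ a : ⋀[ℚ]^3 (UnitsQ (ResField p)),
      ∃ b : ⋀[ℚ]^4 (UnitsQ (RatFunc F)),
        D4 p b = a ∧ ∀ q : MonicIrr F, q ≠ p → D4 q b = 0) ∧
    (∀ a : B2 (ResField p) ⊗[ℚ] UnitsQ (ResField p),
      ∃ b : B2 (RatFunc F) ⊗[ℚ] (⋀[ℚ]^2 (UnitsQ (RatFunc F))),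
        DB p b = a ∧ ∀ q : MonicIrr F, q ≠ p → DB q b = 0) := by
  refine ⟨exists_lift_vanishing_off_of_lower_defects D4 (fun q => q.1.natDegree) _
      (fun _ => span_wedgeF 3) ?_ p,
    exists_lift_vanishing_off_of_lower_defects DB (fun q => q.1.natDegree) _
      (fun _ => span_tmul_eq_top_of_span_eq_top (B2.span_gen _) span_mkQ) ?_ p⟩
  · rintro q _ ⟨u, hu, rfl⟩
    exact IsTame.exists_lift_wedgeF_lower_defects hν hres hD4 q hu
  · rintro q _ ⟨_, ⟨x, hx, rfl⟩, _, ⟨y, hy, rfl⟩, rfl⟩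
    exact IsTameB2.exists_lift_gen_tmul_lower_defects hν hres hD2 hDB q hx hy

/-- existence of lifts for the tame symbols at a monic irreducible `p`,
both on `Λ³ F(p)^×` (lift in `Λ⁴ F(t)^×`) and on `B₂(F(p)) ⊗ F(p)^×`
(lift in `B₂(F(t)) ⊗ Λ² F(t)^×`). -/
theorem statement_7 (k F : Type u) [Field k] [IsAlgClosed k] [CharZero k] [Field F]
    [Algebra k F] (hF : IsFields1 k F) (p : MonicIrr F)
    (ν : ∀ q : MonicIrr F, RatFunc F → ℤ) (hν : ∀ q, IsNuP q (ν q))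
    (res : ∀ q : MonicIrr F, RatFunc F → ResField q) (hres : ∀ q, IsResP q (ν q) (res q))
    (D4 : ∀ q : MonicIrr F,
      ⋀[ℚ]^4 (UnitsQ (RatFunc F)) →ₗ[ℚ] ⋀[ℚ]^3 (UnitsQ (ResField q)))
    (hD4 : ∀ q, IsTame (ν q) (res q) 3 (D4 q))
    (D2 : ∀ q : MonicIrr F, ⋀[ℚ]^2 (UnitsQ (RatFunc F)) →ₗ[ℚ] UnitsQ (ResField q))
    (hD2 : ∀ q, IsTame2U (ν q) (res q) (D2 q))
    (DB : ∀ q : MonicIrr F,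
      B2 (RatFunc F) ⊗[ℚ] (⋀[ℚ]^2 (UnitsQ (RatFunc F))) →ₗ[ℚ]
        B2 (ResField q) ⊗[ℚ] UnitsQ (ResField q))
    (hDB : ∀ q, IsTameB2 (ν q) (res q) (D2 q) (DB q)) :
    (∀ a : ⋀[ℚ]^3 (UnitsQ (ResField p)),
      ∃ b : ⋀[ℚ]^4 (UnitsQ (RatFunc F)),
        D4 p b = a ∧ ∀ q : MonicIrr F, q ≠ p → D4 q b = 0) ∧
    (∀ a : B2 (ResField p) ⊗[ℚ] UnitsQ (ResField p),
      ∃ b : B2 (RatFunc F) ⊗[ℚ] (⋀[ℚ]^2 (UnitsQ (RatFunc F))),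
        DB p b = a ∧ ∀ q : MonicIrr F, q ≠ p → DB q b = 0) :=
  statement_7_general F p ν hν res hres D4 hD4 D2 hD2 DB hDB
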